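/- arXiv:2107.01975 — 10 statements merged into one kernel-verified Lean document; each statement's English description precedes it below -/
import Mathlib

section
/- For a stochastic map f : (X,p) → (Y,q) between finite probability spaces, the conditional information loss satisfies K(f) = −Σ_{x : p_x > 0} Σ_{y : f_{yx} > 0} f_{yx} p_x log(f_{yx} p_x / q_y). -/
/-! The chain rule `H(p) + H(f|p) = H(r)` for the joint distribution `r x y = f x y * p x`, together
with `H(q) = -∑ r log q` for its marginal `q`, turns `K(f)` into the single double sum
`∑ (negMulLog r + r log q) = -∑ r log (r / q)`; the terms with `p x = 0` or `f x y = 0` vanish. -/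

open Real BigOperators
open scoped Classical

noncomputable def entropy {X : Type*} [Fintype X] (p : X → ℝ) : ℝ :=
  ∑ x, Real.negMulLog (p x)

def IsDist {X : Type*} [Fintype X] (p : X → ℝ) : Prop :=
  (∀ x, 0 ≤ p x) ∧ ∑ x, p x = 1

open Finset

section

variable {X Y : Type*} [Fintype X] [Fintype Y]

theorem entropy_add_sum_mul_entropy_eq_sum_negMulLog (p : X → ℝ) (f : X → Y → ℝ)
    (hf : ∀ x, ∑ y, f x y = 1) :
    entropy p + ∑ x, p x * entropy (f x) = ∑ x, ∑ y, negMulLog (f x y * p x) := by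
  simp only [entropy, negMulLog_mul, sum_add_distrib, ← sum_mul, hf, one_mul, mul_sum]
  exact add_comm _ _

theorem entropy_eq_neg_sum_mul_log_of_eq_sum (r : X → Y → ℝ) (q : Y → ℝ)
    (hq : ∀ y, q y = ∑ x, r x y) :
    entropy q = -∑ x, ∑ y, r x y * log (q y) := by
  rw [sum_comm, ← sum_neg_distrib]
  refine sum_congr rfl fun y _ => ?_
  rw [negMulLog, ← sum_mul, ← hq, neg_mul]

end

theorem negMulLog_add_mul_log_eq_neg_mul_log_div {x c : ℝ} (hc : x ≠ 0 → c ≠ 0) :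
    negMulLog x + x * log c = -(x * log (x / c)) := by
  rcases eq_or_ne x 0 with rfl | hx
  · simp
  rw [log_div hx (hc hx), negMulLog]
  ring

theorem conditional_information_loss_formula
    {X Y : Type*} [Fintype X] [Fintype Y]
    (p : X → ℝ) (f : X → Y → ℝ) (q : Y → ℝ)
    (hp : IsDist p) (hf : ∀ x, IsDist (f x))
    (hq : ∀ y, q y = ∑ x, f x y * p x) :
    entropy p - entropy q + ∑ x, p x * entropy (f x) =
      -∑ x ∈ Finset.univ.filter (fun x => 0 < p x),
        ∑ y ∈ Finset.univ.filter (fun y => 0 < f x y),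
          f x y * p x * Real.log (f x y * p x / q y) := by
  have hjoint_nonneg : ∀ x y, 0 ≤ f x y * p x := fun x y => mul_nonneg ((hf x).1 y) (hp.1 x)
  have hq_ne : ∀ x y, f x y * p x ≠ 0 → q y ≠ 0 := fun x y hxy hqy =>
    hxy <| (sum_eq_zero_iff_of_nonneg fun x' _ => hjoint_nonneg x' y).1 (hq y ▸ hqy) x (mem_univ x)
  calc entropy p - entropy q + ∑ x, p x * entropy (f x)
      = ∑ x, ∑ y, (negMulLog (f x y * p x) + f x y * p x * log (q y)) := by
        rw [sub_add_eq_add_sub, entropy_add_sum_mul_entropy_eq_sum_negMulLog p f fun x => (hf x).2,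
          entropy_eq_neg_sum_mul_log_of_eq_sum _ q hq, sub_neg_eq_add]
        simp only [sum_add_distrib]
    _ = -∑ x, ∑ y, f x y * p x * log (f x y * p x / q y) := by
        simp only [negMulLog_add_mul_log_eq_neg_mul_log_div (hq_ne _ _), sum_neg_distrib]
    _ = _ := by
        rw [sum_filter_of_ne fun x _ h => (hp.1 x).lt_of_ne fun h0 => h (by simp [← h0])]
        rw [sum_congr rfl fun x _ =>
          sum_filter_of_ne fun y _ h => ((hf x).1 y).lt_of_ne fun h0 => h (by simp [← h0])]
end

section
/- Let F be a functor from the category FinPS of finite probability spaces and measure-preserving stochastic maps to the additive monoid of non-negative reals (F sends composition to addition and identities to 0). Then F(f) = 0 for every morphism f. -/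
open Real BigOperators
open scoped Classical

structure FinPS where
  carrier : Type
  [fin : Fintype carrier]
  p : carrier → ℝ
  nonneg : ∀ x, 0 ≤ p x
  sum_one : ∑ x, p x = 1

attribute [instance] FinPS.fin

structure FinPSHom (A B : FinPS) where
  m : A.carrier → B.carrier → ℝ
  nonneg : ∀ x y, 0 ≤ m x y
  rowsum : ∀ x, ∑ y, m x y = 1
  push : ∀ y, ∑ x, m x y * A.p x = B.p y

/-!
A morphism out of the one-point space followed by the unique morphism back is the identity, so
nonnegativity forces `F` to vanish on every morphism out of the point. Any `f : A → B` turns the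
morphism from the point to `A` into the one to `B`, hence `F f = F(pt → B) - F(pt → A) = 0`.
-/

namespace FinPS

def pt : FinPS where
  carrier := PUnit
  p _ := 1
  nonneg _ := zero_le_one
  sum_one := by simp

instance : Unique pt.carrier := inferInstanceAs (Unique PUnit)

end FinPS

namespace FinPSHom

noncomputable def id (A : FinPS) : FinPSHom A A where
  m x x' := if x = x' then 1 else 0
  nonneg _ _ := by positivity
  rowsum x := by simp
  push y := by simp

def fromPt (A : FinPS) : FinPSHom FinPS.pt A where
  m _ y := A.p y
  nonneg _ y := A.nonneg y
  rowsum _ := A.sum_one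
  push y := by rw [Fintype.sum_unique]; exact mul_one _

def toPt (A : FinPS) : FinPSHom A FinPS.pt where
  m _ _ := 1
  nonneg _ _ := zero_le_one
  rowsum _ := by simp
  push _ := by simp [FinPS.pt, A.sum_one]

theorem id_m_eq_fromPt_comp_toPt (A : FinPS) (x z : FinPS.pt.carrier) :
    (id FinPS.pt).m x z = ∑ y, (fromPt A).m x y * (toPt A).m y z := by
  simp [id, fromPt, toPt, A.sum_one, Subsingleton.elim x z]

theorem fromPt_m_eq_fromPt_comp {A B : FinPS} (f : FinPSHom A B) (x : FinPS.pt.carrier)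
    (z : B.carrier) : (fromPt B).m x z = ∑ y, (fromPt A).m x y * f.m y z := by
  simp only [fromPt, ← f.push z, mul_comm]

theorem functor_fromPt_eq_zero (F : ∀ A B : FinPS, FinPSHom A B → ℝ)
    (Fnonneg : ∀ (A B : FinPS) (f : FinPSHom A B), 0 ≤ F A B f)
    (Fid : ∀ (A : FinPS) (i : FinPSHom A A),
      (∀ x x', i.m x x' = if x = x' then 1 else 0) → F A A i = 0)
    (Fcomp : ∀ (A B C : FinPS) (f : FinPSHom A B) (g : FinPSHom B C) (h : FinPSHom A C),
      (∀ x z, h.m x z = ∑ y, f.m x y * g.m y z) → F A C h = F A B f + F B C g)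
    (A : FinPS) : F FinPS.pt A (fromPt A) = 0 := by
  have hsum : F _ _ (fromPt A) + F _ _ (toPt A) = 0 := by
    rw [← Fcomp _ _ _ _ _ (id FinPS.pt) (id_m_eq_fromPt_comp_toPt A)]
    exact Fid _ _ fun _ _ => rfl
  exact ((add_eq_zero_iff_of_nonneg (Fnonneg _ _ _) (Fnonneg _ _ _)).1 hsum).1

end FinPSHom

theorem functor_to_nonneg_reals_vanishes
    (F : ∀ A B : FinPS, FinPSHom A B → ℝ)
    (Fnonneg : ∀ (A B : FinPS) (f : FinPSHom A B), 0 ≤ F A B f)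
    (Fid : ∀ (A : FinPS) (i : FinPSHom A A),
      (∀ x x', i.m x x' = if x = x' then 1 else 0) → F A A i = 0)
    (Fcomp : ∀ (A B C : FinPS) (f : FinPSHom A B) (g : FinPSHom B C) (h : FinPSHom A C),
      (∀ x z, h.m x z = ∑ y, f.m x y * g.m y z) → F A C h = F A B f + F B C g)
    (A B : FinPS) (f : FinPSHom A B) :
    F A B f = 0 := by
  have hfromPt := FinPSHom.functor_fromPt_eq_zero F Fnonneg Fid Fcomp
  have hcomp := Fcomp _ _ _ _ f _ (FinPSHom.fromPt_m_eq_fromPt_comp f)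
  rw [hfromPt, hfromPt, zero_add] at hcomp
  exact hcomp.symm
end

section
/- Conditional information loss is convex linear: for a probability distribution p on a finite index set X and a family of measure-preserving stochastic maps Q^x : (Y_x, q^x) → (Y'_x, q'^x), the conditional information loss of the p-weighted convex sum ⊕_x p_x Q^x equals Σ_x p_x K(Q^x). -/
open Real BigOperators
open scoped Classical

/-! Entropy satisfies the chain rule on a disjoint union: if `r` gives mass `p x * q x z` to
`⟨x, z⟩`, then `H(r) = H(p) + ∑ x, p x * H(q x)`, so the `H(p)` terms of `H(r)` and `H(r')`
cancel. A row of the convex sum vanishes off its own block, so its entropy is that of `Q x z`. -/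

lemma entropy_sigma {X : Type*} [Fintype X] {Z : X → Type*} [∀ x, Fintype (Z x)]
    (p : X → ℝ) (s : ∀ x, Z x → ℝ) (t : (Σ x, Z x) → ℝ)
    (hs : ∀ x, ∑ z, s x z = 1) (ht : ∀ x (z : Z x), t ⟨x, z⟩ = p x * s x z) :
    entropy t = entropy p + ∑ x, p x * entropy (s x) := by
  unfold entropy
  rw [Fintype.sum_sigma, ← Finset.sum_add_distrib]
  refine Finset.sum_congr rfl fun x _ => ?_
  simp only [ht, Real.negMulLog_mul, Finset.sum_add_distrib, ← Finset.sum_mul,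
    ← Finset.mul_sum, hs x, one_mul]

lemma entropy_sigma_of_eq_zero_of_ne {X : Type*} [Fintype X] {Z : X → Type*}
    [∀ x, Fintype (Z x)] (t : (Σ x, Z x) → ℝ) (x : X)
    (ht : ∀ x' (z : Z x'), x' ≠ x → t ⟨x', z⟩ = 0) :
    entropy t = entropy fun z : Z x => t ⟨x, z⟩ := by
  unfold entropy
  rw [Fintype.sum_sigma, Fintype.sum_eq_single x]
  intro x' hx'
  simp [ht x' _ hx']

theorem conditional_information_loss_convex_linear_general
    {X : Type*} [Fintype X] {Y Y' : X → Type*}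
    [∀ x, Fintype (Y x)] [∀ x, Fintype (Y' x)]
    (p : X → ℝ) (q : ∀ x, Y x → ℝ) (q' : ∀ x, Y' x → ℝ)
    (Q : ∀ x, Y x → Y' x → ℝ)
    (h : (Σ x, Y x) → (Σ x, Y' x) → ℝ)
    (r : (Σ x, Y x) → ℝ) (r' : (Σ x, Y' x) → ℝ)
    (hq : ∀ x, IsDist (q x)) (hq' : ∀ x, IsDist (q' x))
    (hr : ∀ x (z : Y x), r ⟨x, z⟩ = p x * q x z)
    (hr' : ∀ x (z' : Y' x), r' ⟨x, z'⟩ = p x * q' x z')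
    (hdiag : ∀ x (z : Y x) (z' : Y' x), h ⟨x, z⟩ ⟨x, z'⟩ = Q x z z')
    (hoff : ∀ x x' (z : Y x) (z' : Y' x'), x ≠ x' → h ⟨x, z⟩ ⟨x', z'⟩ = 0) :
    entropy r - entropy r' + ∑ z, r z * entropy (h z) =
      ∑ x, p x * (entropy (q x) - entropy (q' x) + ∑ z, q x z * entropy (Q x z)) := by
  have hrow : ∀ x (z : Y x), entropy (h ⟨x, z⟩) = entropy (Q x z) := fun x z => by
    rw [entropy_sigma_of_eq_zero_of_ne _ x fun x' z' hx' => hoff x x' z z' hx'.symm]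
    simp only [hdiag]
  have hcond : ∑ z, r z * entropy (h z) = ∑ x, p x * ∑ z, q x z * entropy (Q x z) := by
    simp only [Fintype.sum_sigma, hr, hrow, mul_assoc, Finset.mul_sum]
  rw [entropy_sigma p q r (fun x => (hq x).2) hr, entropy_sigma p q' r' (fun x => (hq' x).2) hr',
    hcond]
  simp only [mul_add, mul_sub, Finset.sum_add_distrib, Finset.sum_sub_distrib]
  ring

theorem conditional_information_loss_convex_linear
    {X : Type*} [Fintype X] {Y Y' : X → Type*}
    [∀ x, Fintype (Y x)] [∀ x, Fintype (Y' x)]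
    (p : X → ℝ) (q : ∀ x, Y x → ℝ) (q' : ∀ x, Y' x → ℝ)
    (Q : ∀ x, Y x → Y' x → ℝ)
    (h : (Σ x, Y x) → (Σ x, Y' x) → ℝ)
    (r : (Σ x, Y x) → ℝ) (r' : (Σ x, Y' x) → ℝ)
    (hp : IsDist p) (hq : ∀ x, IsDist (q x)) (hq' : ∀ x, IsDist (q' x))
    (hQ : ∀ x z, IsDist (Q x z))
    (hpush : ∀ x z', q' x z' = ∑ z, Q x z z' * q x z)
    (hr : ∀ x (z : Y x), r ⟨x, z⟩ = p x * q x z)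
    (hr' : ∀ x (z' : Y' x), r' ⟨x, z'⟩ = p x * q' x z')
    (hdiag : ∀ x (z : Y x) (z' : Y' x), h ⟨x, z⟩ ⟨x, z'⟩ = Q x z z')
    (hoff : ∀ x x' (z : Y x) (z' : Y' x'), x ≠ x' → h ⟨x, z⟩ ⟨x', z'⟩ = 0) :
    entropy r - entropy r' + ∑ z, r z * entropy (h z) =
      ∑ x, p x * (entropy (q x) - entropy (q' x) + ∑ z, q x z * entropy (Q x z)) :=
  conditional_information_loss_convex_linear_general p q q' Q h r r' hq hq' hr hr' hdiag hoff
end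

section
/- For a composable pair of stochastic maps (X,p) → (Y,q) → (Z,r) between finite probability spaces, the following are equivalent: (a) for every x with p_x > 0 and every z ∈ Z there is at most one y ∈ Y with g_{zy} f_{yx} ≠ 0; (b) there exists a function h : Z × X → Y with (g∘f)_{zx} = g_{z,h(z,x)} f_{h(z,x),x} for all z ∈ Z and all x with p_x > 0; (c) there exists a function h : Z × X → Y with [h(z,x) = y] · (g∘f)_{zx} · p_x = g_{zy} f_{yx} p_x for all (z,y,x). -/
open Real BigOperators
open scoped Classical

/-! For fixed `z` and `x` the weights `g y z * f x y` are nonnegative, so their sum equals one of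
them iff at most one of them is nonzero: choosing such a `y` for every `(z, x)` gives (a) ⇔ (b).
Multiplying by `p x ≥ 0`, (c) says the same for `x` with `p x > 0` and is vacuous when `p x = 0`,
which gives (b) ⇔ (c) with the same `h`. -/

theorem IsDist.nonempty {X : Type*} [Fintype X] {p : X → ℝ} (hp : IsDist p) : Nonempty X := by
  by_contra hX
  rw [not_nonempty_iff] at hX
  simpa using hp.2

section NonnegSum

variable {ι M : Type*} [Fintype ι] [AddCommMonoid M] [PartialOrder M] [IsOrderedCancelAddMonoid M]
  {F : ι → M}

theorem sum_eq_apply_iff_of_nonneg (hF : 0 ≤ F) (a : ι) :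
    ∑ i, F i = F a ↔ ∀ i ≠ a, F i = 0 := by
  refine ⟨fun h => ?_, Fintype.sum_eq_single a⟩
  have hrest : ∑ i ∈ {a}ᶜ, F i = 0 := by
    rw [Fintype.sum_eq_add_sum_compl a] at h
    exact add_eq_left.1 h
  intro i hi
  exact (Finset.sum_eq_zero_iff_of_nonneg fun j _ => hF j).1 hrest i (by simpa using hi)

theorem exists_sum_eq_apply_iff_of_nonneg [Nonempty ι] (hF : 0 ≤ F) :
    (∃ a, ∑ i, F i = F a) ↔ ∀ i j, F i ≠ 0 → F j ≠ 0 → i = j := by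
  simp_rw [sum_eq_apply_iff_of_nonneg hF]
  constructor
  · rintro ⟨a, ha⟩ i j hi hj
    rw [not_imp_comm.1 (ha i) hi, not_imp_comm.1 (ha j) hj]
  · intro h
    by_cases hsupp : ∃ a, F a ≠ 0
    · obtain ⟨a, ha⟩ := hsupp
      exact ⟨a, fun i hi => by_contra fun hFi => hi (h i a hFi ha)⟩
    · push Not at hsupp
      exact ⟨Classical.arbitrary ι, fun i _ => hsupp i⟩

end NonnegSum

theorem sum_eq_apply_iff_ite_mul_sum_mul_eq {ι K : Type*} [Fintype ι] [Field K] [LinearOrder K]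
    [IsStrictOrderedRing K] {F : ι → K} (hF : 0 ≤ F) (a : ι) {c : K} (hc : 0 ≤ c) :
    (0 < c → ∑ i, F i = F a) ↔ ∀ i, (if a = i then (1 : K) else 0) * (∑ j, F j) * c = F i * c := by
  rcases hc.eq_or_lt with rfl | hc
  · simp
  simp only [hc, true_imp_iff, mul_left_inj' hc.ne']
  constructor
  · intro h i
    split_ifs with hi
    · rw [one_mul, h, hi]
    · rw [zero_mul, (sum_eq_apply_iff_of_nonneg hF a).1 h i (Ne.symm hi)]
  · intro h
    simpa using h a

theorem mediator_equivalence_general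
    {X Y Z : Type*} [Fintype X] [Fintype Y] [Fintype Z]
    (p : X → ℝ)
    (f : X → Y → ℝ) (g : Y → Z → ℝ)
    (hp : IsDist p) (hf : ∀ x, IsDist (f x)) (hg : ∀ y, IsDist (g y)) :
    ((∀ x, 0 < p x → ∀ z, ∀ y y', g y z * f x y ≠ 0 → g y' z * f x y' ≠ 0 → y = y') ↔
      (∃ h : Z × X → Y, ∀ z x, 0 < p x →
        (∑ y, g y z * f x y) = g (h (z, x)) z * f x (h (z, x)))) ∧
    ((∃ h : Z × X → Y, ∀ z x, 0 < p x →
        (∑ y, g y z * f x y) = g (h (z, x)) z * f x (h (z, x))) ↔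
      (∃ h : Z × X → Y, ∀ z y x,
        (if h (z, x) = y then (1:ℝ) else 0) * (∑ y', g y' z * f x y') * p x =
          g y z * f x y * p x)) := by
  have hF : ∀ z x, 0 ≤ fun y => g y z * f x y := fun z x y => mul_nonneg ((hg y).1 z) ((hf x).1 y)
  refine ⟨⟨fun hsub => ?_, ?_⟩, exists_congr fun h => ?_⟩
  · have hpoint : ∀ zx : Z × X, ∃ y, 0 < p zx.2 →
        ∑ y', g y' zx.1 * f zx.2 y' = g y zx.1 * f zx.2 y := by
      rintro ⟨z, x⟩
      have := (hf x).nonempty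
      by_cases hx : 0 < p x
      · obtain ⟨y, hy⟩ := (exists_sum_eq_apply_iff_of_nonneg (hF z x)).2 (hsub x hx z)
        exact ⟨y, fun _ => hy⟩
      · exact ⟨Classical.arbitrary Y, fun hx' => absurd hx' hx⟩
    obtain ⟨h, hh⟩ := Classical.skolem.1 hpoint
    exact ⟨h, fun z x => hh (z, x)⟩
  · rintro ⟨h, hh⟩ x hx z
    have := (hf x).nonempty
    exact (exists_sum_eq_apply_iff_of_nonneg (hF z x)).1 ⟨_, hh z x hx⟩
  · exact forall_congr' fun z => (forall_congr' fun x =>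
      sum_eq_apply_iff_ite_mul_sum_mul_eq (hF z x) (h (z, x)) (hp.1 x)).trans forall_comm

theorem mediator_equivalence
    {X Y Z : Type*} [Fintype X] [Fintype Y] [Fintype Z]
    (p : X → ℝ) (q : Y → ℝ) (r : Z → ℝ)
    (f : X → Y → ℝ) (g : Y → Z → ℝ)
    (hp : IsDist p) (hf : ∀ x, IsDist (f x)) (hg : ∀ y, IsDist (g y))
    (hq : ∀ y, q y = ∑ x, f x y * p x)
    (hr : ∀ z, r z = ∑ y, g y z * q y) :
    ((∀ x, 0 < p x → ∀ z, ∀ y y', g y z * f x y ≠ 0 → g y' z * f x y' ≠ 0 → y = y') ↔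
      (∃ h : Z × X → Y, ∀ z x, 0 < p x →
        (∑ y, g y z * f x y) = g (h (z, x)) z * f x (h (z, x)))) ∧
    ((∃ h : Z × X → Y, ∀ z x, 0 < p x →
        (∑ y, g y z * f x y) = g (h (z, x)) z * f x (h (z, x))) ↔
      (∃ h : Z × X → Y, ∀ z y x,
        (if h (z, x) = y then (1:ℝ) else 0) * (∑ y', g y' z * f x y') * p x =
          g y z * f x y * p x)) :=
  mediator_equivalence_general p f g hp hf hg
end

section
/- For composable stochastic maps (X,p) → (Y,q) → (Z,r) between finite probability spaces, conditional entropy is additive, i.e., H(g∘f|p) = H(f|p) + H(g|q), if and only if the pair (f,g) admits a mediator, i.e., a function h : Z × X → Y satisfying (g∘f)_{zx} = g_{z,h(z,x)} f_{h(z,x),x} for all z ∈ Z and all x with p_x > 0. -/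
open Real BigOperators
open scoped Classical

/-!
By the chain rule `negMulLog (g_{zy} f_{yx}) = f_{yx} negMulLog g_{zy} + g_{zy} negMulLog f_{yx}`,
`H(f|p) + H(g|q)` is the conditional entropy of `(y, z)` given `x` under the joint law
`g_{zy} f_{yx} p_x`, while `H(g∘f|p)` is that of `z` given `x`. Their difference is the `p`-average
over `x` of the defects `∑_y negMulLog a_y - negMulLog (∑_y a_y) = ∑_y a_y (log ∑ a - log a_y) ≥ 0`
of `a_y = g_{zy} f_{yx}`, summed over `z`. A defect vanishes exactly when a single `a_y` carries
the whole sum, and that `y` is the value of the mediator at `(z, x)`.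
-/

open Finset

namespace Real

variable {ι : Type*}

lemma sum_negMulLog_sub_negMulLog_sum (s : Finset ι) (a : ι → ℝ) :
    ∑ i ∈ s, negMulLog (a i) - negMulLog (∑ i ∈ s, a i) =
      ∑ i ∈ s, a i * (log (∑ j ∈ s, a j) - log (a i)) := by
  simp only [negMulLog, neg_mul, sum_neg_distrib, mul_sub, sum_sub_distrib, ← sum_mul]
  ring

lemma mul_log_sub_log_nonneg {a b : ℝ} (ha : 0 ≤ a) (hab : a ≤ b) :
    0 ≤ a * (log b - log a) := by
  rcases ha.eq_or_lt with rfl | ha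
  · simp
  · exact mul_nonneg ha.le (sub_nonneg.2 (log_le_log ha hab))

lemma mul_log_sub_log_eq_zero_iff {a b : ℝ} (ha : 0 ≤ a) (hab : a ≤ b) :
    a * (log b - log a) = 0 ↔ a = 0 ∨ a = b := by
  rcases ha.eq_or_lt with rfl | ha
  · simp
  · have hb : 0 < b := ha.trans_le hab
    rw [mul_eq_zero, sub_eq_zero, eq_comm (a := log b), log_injOn_pos.eq_iff ha hb]

lemma negMulLog_sum_le_sum_negMulLog {s : Finset ι} {a : ι → ℝ} (ha : ∀ i ∈ s, 0 ≤ a i) :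
    negMulLog (∑ i ∈ s, a i) ≤ ∑ i ∈ s, negMulLog (a i) := by
  rw [← sub_nonneg, sum_negMulLog_sub_negMulLog_sum]
  exact sum_nonneg fun i hi => mul_log_sub_log_nonneg (ha i hi) (single_le_sum ha hi)

lemma sum_negMulLog_eq_negMulLog_sum_iff [Fintype ι] [Nonempty ι] {a : ι → ℝ}
    (ha : ∀ i, 0 ≤ a i) :
    ∑ i, negMulLog (a i) = negMulLog (∑ i, a i) ↔ ∃ j, ∑ i, a i = a j := by
  have ha' : ∀ i ∈ univ, 0 ≤ a i := fun i _ => ha i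
  have hle : ∀ i, a i ≤ ∑ j, a j := fun i => single_le_sum ha' (mem_univ i)
  rw [← sub_eq_zero, sum_negMulLog_sub_negMulLog_sum,
    sum_eq_zero_iff_of_nonneg fun i _ => mul_log_sub_log_nonneg (ha i) (hle i)]
  simp only [mem_univ, true_implies, mul_log_sub_log_eq_zero_iff (ha _) (hle _)]
  constructor
  · intro h
    by_cases hzero : ∀ i, a i = 0
    · exact ⟨Classical.arbitrary ι, by simp [hzero]⟩
    · push Not at hzero
      obtain ⟨j, hj⟩ := hzero
      exact ⟨j, ((h j).resolve_left hj).symm⟩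
  · rintro ⟨j, hj⟩ i
    by_cases hij : i = j
    · exact Or.inr (hij ▸ hj.symm)
    · have := add_le_sum ha' (mem_univ i) (mem_univ j) hij
      exact Or.inl (le_antisymm (by linarith) (ha i))

end Real

lemma entropy_add_sum_mul_entropy_eq {Y Z : Type*} [Fintype Y] [Fintype Z] (f : Y → ℝ)
    (g : Y → Z → ℝ) (hg : ∀ y, ∑ z, g y z = 1) :
    entropy f + ∑ y, f y * entropy (g y) = ∑ z, ∑ y, negMulLog (g y z * f y) := by
  rw [add_comm]
  simp only [entropy, negMulLog_mul, sum_add_distrib, mul_sum]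
  congr 1
  · exact sum_comm
  · rw [sum_comm]
    simp only [← sum_mul, hg, one_mul]

lemma condEntropy_add_condEntropy_eq {X Y Z : Type*} [Fintype X] [Fintype Y] [Fintype Z]
    (p : X → ℝ) (q : Y → ℝ) (f : X → Y → ℝ) (g : Y → Z → ℝ) (hg : ∀ y, ∑ z, g y z = 1)
    (hq : ∀ y, q y = ∑ x, f x y * p x) :
    (∑ x, p x * entropy (f x)) + ∑ y, q y * entropy (g y) =
      ∑ x, p x * ∑ z, ∑ y, negMulLog (g y z * f x y) := by
  simp only [← entropy_add_sum_mul_entropy_eq _ _ hg, mul_add, sum_add_distrib, hq, sum_mul, mul_sum]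
  rw [sum_comm (f := fun y x => _)]
  congr 1
  exact sum_congr rfl fun x _ => sum_congr rfl fun y _ => by ring

lemma sum_mul_eq_zero_iff_of_nonneg {X : Type*} [Fintype X] {p G : X → ℝ}
    (hp : ∀ x, 0 ≤ p x) (hG : ∀ x, 0 ≤ G x) :
    ∑ x, p x * G x = 0 ↔ ∀ x, 0 < p x → G x = 0 := by
  rw [sum_eq_zero_iff_of_nonneg fun x _ => mul_nonneg (hp x) (hG x)]
  refine forall_congr' fun x => ?_
  rw [mul_eq_zero, (hp x).lt_iff_ne', ← or_iff_not_imp_left]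
  simp

lemma exists_fun_forall_imp_iff {α β : Type*} (hβ : α → Nonempty β) {P : α → Prop}
    {R : α → β → Prop} :
    (∃ h : α → β, ∀ a, P a → R a (h a)) ↔ ∀ a, P a → ∃ b, R a b := by
  refine ⟨fun ⟨h, hh⟩ a ha => ⟨h a, hh a ha⟩, fun H => ?_⟩
  have (a : α) : ∃ b, P a → R a b := by
    by_cases ha : P a
    · exact (H a ha).imp fun _ hb _ => hb
    · exact ⟨(hβ a).some, fun ha' => absurd ha' ha⟩
  choose h hh using this
  exact ⟨h, hh⟩

theorem condEntropy_additive_iff_mediator_general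
    {X Y Z : Type*} [Fintype X] [Fintype Y] [Fintype Z]
    (p : X → ℝ) (q : Y → ℝ)
    (f : X → Y → ℝ) (g : Y → Z → ℝ)
    (hp : IsDist p) (hf : ∀ x, IsDist (f x)) (hg : ∀ y, IsDist (g y))
    (hq : ∀ y, q y = ∑ x, f x y * p x) :
    (∑ x, p x * entropy (fun z => ∑ y, g y z * f x y)) =
      (∑ x, p x * entropy (f x)) + (∑ y, q y * entropy (g y)) ↔
    (∃ h : Z × X → Y, ∀ z x, 0 < p x →
      (∑ y, g y z * f x y) = g (h (z, x)) z * f x (h (z, x))) := by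
  have hY (x : X) : Nonempty Y :=
    univ_nonempty_iff.1 (nonempty_of_sum_ne_zero ((hf x).2 ▸ one_ne_zero))
  have hgf (x : X) (y : Y) (z : Z) : 0 ≤ g y z * f x y := mul_nonneg ((hg y).1 z) ((hf x).1 y)
  have hdefect (x : X) (z : Z) :
      0 ≤ ∑ y, negMulLog (g y z * f x y) - negMulLog (∑ y, g y z * f x y) :=
    sub_nonneg.2 (negMulLog_sum_le_sum_negMulLog fun y _ => hgf x y z)
  have hdefect_eq_zero (x : X) :
      ∑ z, (∑ y, negMulLog (g y z * f x y) - negMulLog (∑ y, g y z * f x y)) = 0 ↔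
        ∀ z, ∃ y, ∑ y', g y' z * f x y' = g y z * f x y := by
    have := hY x
    simp only [sum_eq_zero_iff_of_nonneg fun z _ => hdefect x z, mem_univ, true_implies,
      sub_eq_zero, sum_negMulLog_eq_negMulLog_sum_iff (hgf x · _)]
  rw [condEntropy_add_condEntropy_eq p q f g (fun y => (hg y).2) hq, eq_comm, ← sub_eq_zero]
  simp only [entropy, ← sum_sub_distrib, ← mul_sub,
    sum_mul_eq_zero_iff_of_nonneg hp.1 fun x => sum_nonneg fun z _ => hdefect x z, hdefect_eq_zero]
  refine ⟨fun H => ?_, fun ⟨h, hh⟩ x hx z => ⟨h (z, x), hh z x hx⟩⟩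
  obtain ⟨h, hh⟩ := (exists_fun_forall_imp_iff (P := fun zx : Z × X => 0 < p zx.2)
    fun zx => hY zx.2).2 fun zx hx => H zx.2 hx zx.1
  exact ⟨h, fun z x => hh (z, x)⟩

theorem condEntropy_additive_iff_mediator
    {X Y Z : Type*} [Fintype X] [Fintype Y] [Fintype Z]
    (p : X → ℝ) (q : Y → ℝ) (r : Z → ℝ)
    (f : X → Y → ℝ) (g : Y → Z → ℝ)
    (hp : IsDist p) (hf : ∀ x, IsDist (f x)) (hg : ∀ y, IsDist (g y))
    (hq : ∀ y, q y = ∑ x, f x y * p x)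
    (hr : ∀ z, r z = ∑ y, g y z * q y) :
    (∑ x, p x * entropy (fun z => ∑ y, g y z * f x y)) =
      (∑ x, p x * entropy (f x)) + (∑ y, q y * entropy (g y)) ↔
    (∃ h : Z × X → Y, ∀ z x, 0 < p x →
      (∑ y, g y z * f x y) = g (h (z, x)) z * f x (h (z, x))) :=
  condEntropy_additive_iff_mediator_general p q f g hp hf hg hq
end

section
/- For composable stochastic maps (X,p) → (Y,q) → (Z,r) between finite probability spaces, the difference H((g×id_Y)∘Δ_Y∘f | p) − H(g∘f|p) is non-negative and equals −Σ_{x: p_x>0} Σ_{y: f_{yx}>0} Σ_{z: g_{zy}>0} p_x g_{zy} f_{yx} log( g_{zy} f_{yx} / Σ_{y'} g_{zy'} f_{y'x} ). -/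
/-!
For each input `x`, write `a_x(z, y) = g_{zy} f_{yx}`: the joint distribution of `(z, y)`
has entropy `H((g×id)∘Δ∘f)_x` and its `z`-marginal has entropy `H(g∘f)_x`. The difference is the
conditional entropy of `y` given `z`, i.e. `-Σ a log (a / Σ_{y'} a)`, a sum of non-positive terms
because every summand is at most the sum it is divided by. Averaging over `p` gives the identity,
and the terms with `p_x`, `f_{yx}` or `g_{zy}` zero vanish, which accounts for the filters.
-/

open Real BigOperators
open scoped Classical

open Finset

section NegMulLog

variable {ι : Type*} (s : Finset ι) {a : ι → ℝ}

lemma mul_log_div_sum_nonpos (ha : ∀ i ∈ s, 0 ≤ a i) {i : ι} (hi : i ∈ s) :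
    a i * log (a i / ∑ j ∈ s, a j) ≤ 0 :=
  mul_nonpos_of_nonneg_of_nonpos (ha i hi)
    (log_nonpos (div_nonneg (ha i hi) (sum_nonneg ha))
      (div_le_one_of_le₀ (single_le_sum ha hi) (sum_nonneg ha)))

lemma sum_negMulLog_sub_negMulLog_sum (ha : ∀ i ∈ s, 0 ≤ a i) :
    ∑ i ∈ s, negMulLog (a i) - negMulLog (∑ i ∈ s, a i) =
      -∑ i ∈ s, a i * log (a i / ∑ j ∈ s, a j) := by
  have hsplit : negMulLog (∑ i ∈ s, a i) = ∑ i ∈ s, -(a i * log (∑ j ∈ s, a j)) := by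
    rw [negMulLog, neg_mul, sum_mul, sum_neg_distrib]
  rw [hsplit, ← sum_sub_distrib, ← sum_neg_distrib]
  refine sum_congr rfl fun i hi => ?_
  rcases (ha i hi).eq_or_lt with hai | hai
  · simp [← hai]
  · have hsum : 0 < ∑ j ∈ s, a j := hai.trans_le (single_le_sum ha hi)
    rw [log_div hai.ne' hsum.ne', negMulLog]
    ring

end NegMulLog

section Entropy

variable {Z Y : Type*} [Fintype Z] [Fintype Y] {a : Z → Y → ℝ}

lemma entropy_prod_sub_entropy_sum (ha : ∀ z y, 0 ≤ a z y) :
    entropy (fun zy : Z × Y => a zy.1 zy.2) - entropy (fun z => ∑ y, a z y) =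
      -∑ z, ∑ y, a z y * log (a z y / ∑ y', a z y') := by
  rw [entropy, entropy, Fintype.sum_prod_type, ← sum_sub_distrib, ← sum_neg_distrib]
  exact sum_congr rfl fun z _ => sum_negMulLog_sub_negMulLog_sum _ fun y _ => ha z y

lemma entropy_sum_le_entropy_prod (ha : ∀ z y, 0 ≤ a z y) :
    entropy (fun z => ∑ y, a z y) ≤ entropy (fun zy : Z × Y => a zy.1 zy.2) := by
  rw [← sub_nonneg, entropy_prod_sub_entropy_sum ha, neg_nonneg]
  exact sum_nonpos fun z _ => sum_nonpos fun y hy =>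
    mul_log_div_sum_nonpos _ (fun y _ => ha z y) hy

end Entropy

lemma sum_filter_pos_eq_sum {ι M : Type*} [Fintype ι] [AddCommMonoid M] {w : ι → ℝ}
    (hw : ∀ i, 0 ≤ w i) {h : ι → M} (hh : ∀ i, w i = 0 → h i = 0) :
    ∑ i ∈ univ.filter (fun i => 0 < w i), h i = ∑ i, h i :=
  sum_filter_of_ne fun i _ hne => (hw i).lt_of_ne fun h0 => hne (hh i h0.symm)

theorem condEntropy_deviation_general
    {X Y Z : Type*} [Fintype X] [Fintype Y] [Fintype Z]
    (p : X → ℝ)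
    (f : X → Y → ℝ) (g : Y → Z → ℝ)
    (hp : IsDist p) (hf : ∀ x, IsDist (f x)) (hg : ∀ y, IsDist (g y)) :
    0 ≤ (∑ x, p x * entropy (fun zy : Z × Y => g zy.2 zy.1 * f x zy.2)) -
        (∑ x, p x * entropy (fun z => ∑ y, g y z * f x y)) ∧
    (∑ x, p x * entropy (fun zy : Z × Y => g zy.2 zy.1 * f x zy.2)) -
        (∑ x, p x * entropy (fun z => ∑ y, g y z * f x y)) =
      -∑ x ∈ Finset.univ.filter (fun x => 0 < p x),
        ∑ y ∈ Finset.univ.filter (fun y => 0 < f x y),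
          ∑ z ∈ Finset.univ.filter (fun z => 0 < g y z),
            p x * (g y z * f x y) *
              Real.log (g y z * f x y / ∑ y', g y' z * f x y') := by
  have ha : ∀ x z y, 0 ≤ g y z * f x y := fun x z y => mul_nonneg ((hg y).1 z) ((hf x).1 y)
  rw [← sum_sub_distrib]
  refine ⟨sum_nonneg fun x _ => ?_, ?_⟩
  · rw [← mul_sub]
    exact mul_nonneg (hp.1 x) (sub_nonneg.2 (entropy_sum_le_entropy_prod (ha x)))
  calc ∑ x, (p x * entropy (fun zy : Z × Y => g zy.2 zy.1 * f x zy.2) -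
        p x * entropy (fun z => ∑ y, g y z * f x y))
      = -∑ x, ∑ y, ∑ z, p x * (g y z * f x y) *
          log (g y z * f x y / ∑ y', g y' z * f x y') := by
        rw [← sum_neg_distrib]
        refine sum_congr rfl fun x _ => ?_
        rw [← mul_sub, entropy_prod_sub_entropy_sum (ha x), sum_comm, mul_neg, mul_sum]
        simp_rw [mul_sum, mul_assoc]
    _ = _ := by
        rw [sum_filter_pos_eq_sum hp.1 fun x hx => by simp [hx]]
        refine congrArg _ (sum_congr rfl fun x _ => ?_)
        rw [sum_filter_pos_eq_sum (hf x).1 fun y hy => by simp [hy]]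
        exact sum_congr rfl fun y _ =>
          (sum_filter_pos_eq_sum (hg y).1 fun z hz => by simp [hz]).symm

theorem condEntropy_deviation
    {X Y Z : Type*} [Fintype X] [Fintype Y] [Fintype Z]
    (p : X → ℝ) (q : Y → ℝ)
    (f : X → Y → ℝ) (g : Y → Z → ℝ)
    (hp : IsDist p) (hf : ∀ x, IsDist (f x)) (hg : ∀ y, IsDist (g y))
    (hq : ∀ y, q y = ∑ x, f x y * p x) :
    0 ≤ (∑ x, p x * entropy (fun zy : Z × Y => g zy.2 zy.1 * f x zy.2)) -
        (∑ x, p x * entropy (fun z => ∑ y, g y z * f x y)) ∧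
    (∑ x, p x * entropy (fun zy : Z × Y => g zy.2 zy.1 * f x zy.2)) -
        (∑ x, p x * entropy (fun z => ∑ y, g y z * f x y)) =
      -∑ x ∈ Finset.univ.filter (fun x => 0 < p x),
        ∑ y ∈ Finset.univ.filter (fun y => 0 < f x y),
          ∑ z ∈ Finset.univ.filter (fun z => 0 < g y z),
            p x * (g y z * f x y) *
              Real.log (g y z * f x y / ∑ y', g y' z * f x y') :=
  condEntropy_deviation_general p f g hp hf hg
end

section
/- If f : (X,p) → (Y,q) is p-almost-everywhere deterministic (i.e., f_{yx} = δ_{y,φ(x)} for some function φ whenever p_x > 0), then for any composable stochastic map g : (Y,q) → (Z,r), conditional entropy is additive: H(g∘f|p) = H(f|p) + H(g|q). -/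
open Real BigOperators
open scoped Classical

/-! On the support of `p` each row `f x` is the point mass at `φ x`, so it has no entropy and
`g ∘ f` has row `g (φ x)`; off the support the row carries no weight. What remains is the identity
`∑ y, q y * H(g y) = ∑ x, p x * ∑ y, f x y * H(g y)`, which is just `q = f p`. -/

section

variable {X Y Z : Type*} [Fintype X] [Fintype Y]

theorem entropy_pointMass (a : Y) : entropy (fun y => if y = a then (1 : ℝ) else 0) = 0 := by
  simp [entropy, apply_ite Real.negMulLog]

theorem sum_mul_pointMass (g : Y → Z → ℝ) (a : Y) :
    (fun z => ∑ y, g y z * if y = a then (1 : ℝ) else 0) = g a := by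
  funext z
  simp

theorem sum_mul_eq_sum_mul_sum_of_pushforward (p : X → ℝ) (q : Y → ℝ) (f : X → Y → ℝ)
    (hq : ∀ y, q y = ∑ x, f x y * p x) (h : Y → ℝ) :
    ∑ y, q y * h y = ∑ x, p x * ∑ y, f x y * h y := by
  simp only [hq, Finset.sum_mul, Finset.mul_sum]
  rw [Finset.sum_comm]
  exact Finset.sum_congr rfl fun x _ => Finset.sum_congr rfl fun y _ => by ring

theorem entropy_comp_pointMass [Fintype Z] (g : Y → Z → ℝ) (a : Y) :
    entropy (fun z => ∑ y, g y z * if y = a then (1 : ℝ) else 0) =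
      entropy (fun y => if y = a then (1 : ℝ) else 0) +
        ∑ y, (if y = a then (1 : ℝ) else 0) * entropy (g y) := by
  rw [sum_mul_pointMass, entropy_pointMass]
  simp

end

theorem ae_deterministic_condEntropy_additive_general
    {X Y Z : Type*} [Fintype X] [Fintype Y] [Fintype Z]
    (p : X → ℝ) (q : Y → ℝ)
    (f : X → Y → ℝ) (g : Y → Z → ℝ) (φ : X → Y)
    (hp : IsDist p)
    (hq : ∀ y, q y = ∑ x, f x y * p x)
    (hdet : ∀ x, 0 < p x → ∀ y, f x y = if y = φ x then 1 else 0) :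
    (∑ x, p x * entropy (fun z => ∑ y, g y z * f x y)) =
      (∑ x, p x * entropy (f x)) + (∑ y, q y * entropy (g y)) := by
  rw [sum_mul_eq_sum_mul_sum_of_pushforward p q f hq, ← Finset.sum_add_distrib]
  refine Finset.sum_congr rfl fun x _ => ?_
  rcases (hp.1 x).eq_or_lt with hzero | hpos
  · simp [← hzero]
  · have hfx : f x = fun y => if y = φ x then 1 else 0 := funext (hdet x hpos)
    rw [← mul_add, hfx, entropy_comp_pointMass]

theorem ae_deterministic_condEntropy_additive
    {X Y Z : Type*} [Fintype X] [Fintype Y] [Fintype Z]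
    (p : X → ℝ) (q : Y → ℝ)
    (f : X → Y → ℝ) (g : Y → Z → ℝ) (φ : X → Y)
    (hp : IsDist p) (hf : ∀ x, IsDist (f x)) (hg : ∀ y, IsDist (g y))
    (hq : ∀ y, q y = ∑ x, f x y * p x)
    (hdet : ∀ x, 0 < p x → ∀ y, f x y = if y = φ x then 1 else 0) :
    (∑ x, p x * entropy (fun z => ∑ y, g y z * f x y)) =
      (∑ x, p x * entropy (f x)) + (∑ y, q y * entropy (g y)) :=
  ae_deterministic_condEntropy_additive_general p q f g φ hp hq hdet
end

section
/- If f̄ is a Bayesian inverse of the measure-preserving stochastic map f : (X,p) → (Y,q) and ḡ is a Bayesian inverse of g : (Y,q) → (Z,r), then f̄ ∘ ḡ is a Bayesian inverse of g ∘ f : (X,p) → (Z,r). -/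
open Real BigOperators
open scoped Classical

/-- `f x y` is the probability of `y` given `x`, and `fb y x` that of `x` given `y`. -/
def IsBayesianInverse {R X Y : Type*} [Mul R] (p : X → R) (q : Y → R) (f : X → Y → R)
    (fb : Y → X → R) : Prop :=
  ∀ x y, fb y x * q y = f x y * p x

theorem IsBayesianInverse.comp {R X Y Z : Type*} [CommSemiring R] [Fintype Y]
    {p : X → R} {q : Y → R} {r : Z → R} {f : X → Y → R} {g : Y → Z → R}
    {fb : Y → X → R} {gb : Z → Y → R}
    (hfb : IsBayesianInverse p q f fb) (hgb : IsBayesianInverse q r g gb) :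
    IsBayesianInverse p r (fun x z => ∑ y, g y z * f x y) (fun z x => ∑ y, fb y x * gb z y) := by
  intro x z
  calc (∑ y, fb y x * gb z y) * r z = ∑ y, g y z * (fb y x * q y) := by
        rw [Finset.sum_mul]
        refine Finset.sum_congr rfl fun y _ => ?_
        rw [mul_assoc, hgb]
        ring
    _ = (∑ y, g y z * f x y) * p x := by
        simp_rw [Finset.sum_mul, hfb x, mul_assoc]

theorem IsDist.pushforward {X Y : Type*} [Fintype X] [Fintype Y] {μ : Y → ℝ} {k : Y → X → ℝ}
    (hμ : IsDist μ) (hk : ∀ y, IsDist (k y)) : IsDist (fun x => ∑ y, k y x * μ y) := by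
  refine ⟨fun x => Finset.sum_nonneg fun y _ => mul_nonneg ((hk y).1 x) (hμ.1 y), ?_⟩
  simp_rw [Finset.sum_comm (γ := X), ← Finset.sum_mul, (hk _).2, one_mul, hμ.2]

theorem bayesian_inverse_comp_general
    {X Y Z : Type*} [Fintype X] [Fintype Y]
    (p : X → ℝ) (q : Y → ℝ) (r : Z → ℝ)
    (f : X → Y → ℝ) (g : Y → Z → ℝ)
    (fb : Y → X → ℝ) (gb : Z → Y → ℝ)
    (hfb : ∀ y, IsDist (fb y)) (hgb : ∀ z, IsDist (gb z))
    (hfbBayes : ∀ x y, fb y x * q y = f x y * p x)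
    (hgbBayes : ∀ y z, gb z y * r z = g y z * q y) :
    (∀ z, IsDist (fun x => ∑ y, fb y x * gb z y)) ∧
    (∀ x z, (∑ y, fb y x * gb z y) * r z = (∑ y, g y z * f x y) * p x) :=
  ⟨fun z => (hgb z).pushforward hfb, IsBayesianInverse.comp hfbBayes hgbBayes⟩

theorem bayesian_inverse_comp
    {X Y Z : Type*} [Fintype X] [Fintype Y] [Fintype Z]
    (p : X → ℝ) (q : Y → ℝ) (r : Z → ℝ)
    (f : X → Y → ℝ) (g : Y → Z → ℝ)
    (fb : Y → X → ℝ) (gb : Z → Y → ℝ)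
    (hp : IsDist p) (hf : ∀ x, IsDist (f x)) (hg : ∀ y, IsDist (g y))
    (hq : ∀ y, q y = ∑ x, f x y * p x)
    (hr : ∀ z, r z = ∑ y, g y z * q y)
    (hfb : ∀ y, IsDist (fb y)) (hgb : ∀ z, IsDist (gb z))
    (hfbBayes : ∀ x y, fb y x * q y = f x y * p x)
    (hgbBayes : ∀ y z, gb z y * r z = g y z * q y) :
    (∀ z, IsDist (fun x => ∑ y, fb y x * gb z y)) ∧
    (∀ x z, (∑ y, fb y x * gb z y) * r z = (∑ y, g y z * f x y) * p x) :=
  bayesian_inverse_comp_general p q r f g fb gb hfb hgb hfbBayes hgbBayes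
end

section
/- If f̄ is a Bayesian inverse of the measure-preserving stochastic map f : (X,p) → (Y,q), then the conditional information loss of f̄ equals the conditional entropy of f: K(f̄) = H(f|p), and likewise K(f) = H(f̄|q). -/
open Real BigOperators
open scoped Classical

/-!
Bayes' rule says that `f x y * p x` and `fb y x * q y` are the same joint distribution on `X × Y`.
By the chain rule its entropy is `H(p) + H(f|p)` when conditioned on `x`, and `H(q) + H(fb|q)` when
conditioned on `y`; both identities follow by rearranging this equality.
-/

theorem sum_negMulLog_mul_of_sum_eq_one {X : Type*} [Fintype X] (b : X → ℝ) (c : ℝ)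
    (hb : ∑ x, b x = 1) :
    ∑ x, negMulLog (b x * c) = c * entropy b + negMulLog c := by
  simp only [negMulLog_mul, Finset.sum_add_distrib, ← Finset.sum_mul, ← Finset.mul_sum, hb,
    entropy]
  ring

theorem sum_sum_negMulLog_mul_eq_entropy_add {X Y : Type*} [Fintype X] [Fintype Y]
    (p : X → ℝ) (f : X → Y → ℝ) (hf : ∀ x, ∑ y, f x y = 1) :
    ∑ x, ∑ y, negMulLog (f x y * p x) = entropy p + ∑ x, p x * entropy (f x) := by
  simp only [sum_negMulLog_mul_of_sum_eq_one _ _ (hf _), Finset.sum_add_distrib, entropy]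
  ring

theorem K_of_bayesian_inverse_general
    {X Y : Type*} [Fintype X] [Fintype Y]
    (p : X → ℝ) (f : X → Y → ℝ) (q : Y → ℝ) (fb : Y → X → ℝ)
    (hf : ∀ x, IsDist (f x))
    (hfb : ∀ y, IsDist (fb y))
    (hfbBayes : ∀ x y, fb y x * q y = f x y * p x) :
    (entropy q - entropy p + ∑ y, q y * entropy (fb y) = ∑ x, p x * entropy (f x)) ∧
    (entropy p - entropy q + ∑ x, p x * entropy (f x) = ∑ y, q y * entropy (fb y)) := by
  have joint : entropy q + ∑ y, q y * entropy (fb y) = entropy p + ∑ x, p x * entropy (f x) := by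
    rw [← sum_sum_negMulLog_mul_eq_entropy_add q fb (fun y => (hfb y).2),
      ← sum_sum_negMulLog_mul_eq_entropy_add p f (fun x => (hf x).2), Finset.sum_comm]
    simp only [hfbBayes]
  exact ⟨by linarith, by linarith⟩

theorem K_of_bayesian_inverse
    {X Y : Type*} [Fintype X] [Fintype Y]
    (p : X → ℝ) (f : X → Y → ℝ) (q : Y → ℝ) (fb : Y → X → ℝ)
    (hp : IsDist p) (hf : ∀ x, IsDist (f x))
    (hq : ∀ y, q y = ∑ x, f x y * p x)
    (hfb : ∀ y, IsDist (fb y))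
    (hpush : ∀ x, p x = ∑ y, fb y x * q y)
    (hfbBayes : ∀ x y, fb y x * q y = f x y * p x) :
    (entropy q - entropy p + ∑ y, q y * entropy (fb y) = ∑ x, p x * entropy (f x)) ∧
    (entropy p - entropy q + ∑ x, p x * entropy (f x) = ∑ y, q y * entropy (fb y)) :=
  K_of_bayesian_inverse_general p f q fb hf hfb hfbBayes
end

section
/- If composable stochastic maps (X,p) → (Y,q) → (Z,r) admit a mediator h : Z×X → Y (so that h∘γ realizes a.e. coalescability), and f̄, ḡ are Bayesian inverses of f, g respectively, then the pair (ḡ, f̄) : (Z,r) → (Y,q) → (X,p) admits the mediator h∘γ : X×Z → Y, where γ is the swap; i.e., f̄_{xy} ḡ_{yz} r_z = [h(z,x)=y] · (f̄∘ḡ)_{xz} · r_z for all x,y,z. -/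
/-! Applying the two Bayes equations in turn shows that the joint weights `f̄_{xy} ḡ_{yz} r_z`
and `g_{zy} f_{yx} p_x` on `X × Y × Z` coincide. Once the outer factor `p_x` (resp. `r_z`) is
moved inside the sum over `y`, the mediator equation only involves these joint weights, so it
transfers verbatim from `(f, g)` to `(ḡ, f̄)`. -/

open Real BigOperators
open scoped Classical

theorem joint_eq_of_bayesian_inverses {R X Y Z : Type*} [CommSemigroup R]
    (p : X → R) (q : Y → R) (r : Z → R) (f : X → Y → R) (g : Y → Z → R)
    (fb : Y → X → R) (gb : Z → Y → R)
    (hfbBayes : ∀ x y, fb y x * q y = f x y * p x)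
    (hgbBayes : ∀ y z, gb z y * r z = g y z * q y) (x : X) (y : Y) (z : Z) :
    fb y x * gb z y * r z = g y z * f x y * p x :=
  calc fb y x * gb z y * r z = fb y x * (g y z * q y) := by rw [mul_assoc, hgbBayes]
    _ = g y z * (fb y x * q y) := by ac_rfl
    _ = g y z * f x y * p x := by rw [hfbBayes, mul_assoc]

theorem bayesian_inverses_coalescable_general
    {X Y Z : Type*} [Fintype X] [Fintype Y] [Fintype Z]
    (p : X → ℝ) (q : Y → ℝ) (r : Z → ℝ)
    (f : X → Y → ℝ) (g : Y → Z → ℝ)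
    (fb : Y → X → ℝ) (gb : Z → Y → ℝ)
    (h : Z × X → Y)
    (hfbBayes : ∀ x y, fb y x * q y = f x y * p x)
    (hgbBayes : ∀ y z, gb z y * r z = g y z * q y)
    (hmed : ∀ z y x,
      (if h (z, x) = y then (1:ℝ) else 0) * (∑ y', g y' z * f x y') * p x =
        g y z * f x y * p x) :
    ∀ x y z, fb y x * gb z y * r z =
      (if h (z, x) = y then (1:ℝ) else 0) * (∑ y', fb y' x * gb z y') * r z := by
  intro x y z
  have joint := joint_eq_of_bayesian_inverses p q r f g fb gb hfbBayes hgbBayes x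
  calc fb y x * gb z y * r z = g y z * f x y * p x := joint y z
    _ = (if h (z, x) = y then (1:ℝ) else 0) * (∑ y', g y' z * f x y') * p x :=
      (hmed z y x).symm
    _ = (if h (z, x) = y then (1:ℝ) else 0) * ∑ y', g y' z * f x y' * p x := by
      rw [mul_assoc, Finset.sum_mul]
    _ = (if h (z, x) = y then (1:ℝ) else 0) * ∑ y', fb y' x * gb z y' * r z := by
      simp only [joint]
    _ = (if h (z, x) = y then (1:ℝ) else 0) * (∑ y', fb y' x * gb z y') * r z := by
      rw [mul_assoc, Finset.sum_mul]

theorem bayesian_inverses_coalescable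
    {X Y Z : Type*} [Fintype X] [Fintype Y] [Fintype Z]
    (p : X → ℝ) (q : Y → ℝ) (r : Z → ℝ)
    (f : X → Y → ℝ) (g : Y → Z → ℝ)
    (fb : Y → X → ℝ) (gb : Z → Y → ℝ)
    (h : Z × X → Y)
    (hp : IsDist p) (hf : ∀ x, IsDist (f x)) (hg : ∀ y, IsDist (g y))
    (hq : ∀ y, q y = ∑ x, f x y * p x)
    (hr : ∀ z, r z = ∑ y, g y z * q y)
    (hfb : ∀ y, IsDist (fb y)) (hgb : ∀ z, IsDist (gb z))
    (hfbBayes : ∀ x y, fb y x * q y = f x y * p x)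
    (hgbBayes : ∀ y z, gb z y * r z = g y z * q y)
    (hmed : ∀ z y x,
      (if h (z, x) = y then (1:ℝ) else 0) * (∑ y', g y' z * f x y') * p x =
        g y z * f x y * p x) :
    ∀ x y z, fb y x * gb z y * r z =
      (if h (z, x) = y then (1:ℝ) else 0) * (∑ y', fb y' x * gb z y') * r z :=
  bayesian_inverses_coalescable_general p q r f g fb gb h hfbBayes hgbBayes hmed
end
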